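/- (Oversmoothing limit of ridge predictions) Suppose L ∈ ℝ^{n×n} satisfies L^k → 1_n d̄^T as k → ∞ for some vector d̄ ∈ ℝ^n with d̄^T 1_n = 1. Let Z ∈ ℝ^{n×p}, set v = Z^T d̄, and for each k let β̂^{(k)} be the ridge solution on the first n_tr rows of L^k Z with labels Y_tr and parameter λ > 0, and Ŷ_te^{(k)} the predictions on the last n_te rows. Then Ŷ_te^{(k)} → (‖v‖²/(λ + ‖v‖²)) · ȳ_tr · 1_{n_te} as k → ∞, where ȳ_tr is the mean of Y_tr. -/

import Mathlib

/-!
The smoothed features `L^k Z` converge to the matrix all of whose rows equal `v = Zᵀ d̄`.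
Since `λ > 0`, the regularised Gram matrix `XᵀX / n + λ I` is positive definite for every `X`, so
the ridge solution depends continuously on the features and the predictions converge to those
computed from the limiting features. For those the Gram matrix is `v vᵀ + λ I`, of which `v` is an
eigenvector with eigenvalue `λ + ‖v‖²`; hence the ridge solution is `ȳ v / (λ + ‖v‖²)` and every
test prediction equals `ȳ ‖v‖² / (λ + ‖v‖²)`.
-/

open Matrix Filter Topology

namespace Matrix

variable {ι m n α : Type*} [CommSemiring α]

theorem replicateRow_mul [Fintype n] (d : n → α) (Z : Matrix n m α) :
    replicateRow ι d * Z = replicateRow ι (Zᵀ *ᵥ d) := by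
  ext i j
  simp only [replicateRow_apply, mul_apply, mulVec, dotProduct, transpose_apply, mul_comm]

variable [Fintype ι]

theorem replicateRow_transpose_mul_self (v : m → α) :
    (replicateRow ι v)ᵀ * replicateRow ι v = (Fintype.card ι : α) • vecMulVec v v := by
  ext i j
  simp [mul_apply, vecMulVec_apply]

theorem replicateRow_transpose_mulVec (v : m → α) (Y : ι → α) :
    (replicateRow ι v)ᵀ *ᵥ Y = (∑ i, Y i) • v := by
  ext j
  simp [mulVec, dotProduct, Finset.mul_sum, mul_comm]

end Matrix

section Ridge

variable {m : Type*} [Fintype m] [DecidableEq m]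

noncomputable def ridgeSolution (lam : ℝ) {n : ℕ} (X : Matrix (Fin n) m ℝ) (Y : Fin n → ℝ) :
    m → ℝ :=
  ((n : ℝ)⁻¹ • (Xᵀ * X) + lam • (1 : Matrix m m ℝ))⁻¹ *ᵥ ((n : ℝ)⁻¹ • (Xᵀ *ᵥ Y))

theorem posDef_smul_transpose_mul_self_add_smul_one {n : Type*} [Fintype n] {c lam : ℝ}
    (hc : 0 ≤ c) (hlam : 0 < lam) (X : Matrix n m ℝ) :
    (c • (Xᵀ * X) + lam • (1 : Matrix m m ℝ)).PosDef := by
  have hgram : (Xᵀ * X).PosSemidef := by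
    simpa using posSemidef_conjTranspose_mul_self X
  exact PosDef.posSemidef_add (hgram.smul hc) (PosDef.one.smul hlam)

theorem continuous_ridgeSolution {lam : ℝ} (hlam : 0 < lam) {n : ℕ} (Y : Fin n → ℝ) :
    Continuous fun X : Matrix (Fin n) m ℝ => ridgeSolution lam X Y := by
  have hinv : Continuous fun X : Matrix (Fin n) m ℝ =>
      ((n : ℝ)⁻¹ • (Xᵀ * X) + lam • (1 : Matrix m m ℝ))⁻¹ := by
    refine continuous_iff_continuousAt.2 fun X => ContinuousAt.comp (g := Inv.inv) ?_
      (by fun_prop)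
    refine continuousAt_matrix_inv _ ?_
    rw [Ring.inverse_eq_inv']
    have hA := (posDef_smul_transpose_mul_self_add_smul_one (c := (n : ℝ)⁻¹) (by positivity)
      hlam X).isUnit
    exact continuousAt_inv₀ (hA.map detMonoidHom).ne_zero
  exact hinv.matrix_mulVec (by fun_prop)

theorem inv_mulVec_eq_inv_smul_of_mulVec_eq_smul {K : Type*} [Field K] {A : Matrix m m K}
    (hA : IsUnit A) {c : K} (hc : c ≠ 0) {x : m → K} (hx : A *ᵥ x = c • x) :
    A⁻¹ *ᵥ x = c⁻¹ • x := by
  have := hA.invertible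
  exact inv_mulVec_eq_vec (by rw [mulVec_smul, hx, smul_smul, inv_mul_cancel₀ hc, one_smul])

theorem ridgeSolution_replicateRow {lam : ℝ} (hlam : 0 < lam) {n : ℕ} (hn : 0 < n) (v : m → ℝ)
    (Y : Fin n → ℝ) :
    ridgeSolution lam (replicateRow (Fin n) v) Y =
      (((n : ℝ)⁻¹ * ∑ i, Y i) / (lam + v ⬝ᵥ v)) • v := by
  have hn' : (n : ℝ) ≠ 0 := by positivity
  have hgram :
      (n : ℝ)⁻¹ • ((replicateRow (Fin n) v)ᵀ * replicateRow (Fin n) v) = vecMulVec v v := by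
    rw [replicateRow_transpose_mul_self, Fintype.card_fin, smul_smul, inv_mul_cancel₀ hn',
      one_smul]
  have hA : IsUnit (vecMulVec v v + lam • (1 : Matrix m m ℝ)) := by
    rw [← hgram]
    exact (posDef_smul_transpose_mul_self_add_smul_one (by positivity) hlam _).isUnit
  have hQ : lam + v ⬝ᵥ v ≠ 0 :=
    (add_pos_of_pos_of_nonneg hlam (by simpa using dotProduct_star_self_nonneg v)).ne'
  have heig : (vecMulVec v v + lam • (1 : Matrix m m ℝ)) *ᵥ v = (lam + v ⬝ᵥ v) • v := by
    rw [add_mulVec, vecMulVec_mulVec, smul_mulVec, one_mulVec, op_smul_eq_smul, add_smul,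
      add_comm]
  rw [ridgeSolution, hgram, replicateRow_transpose_mulVec, smul_smul, mulVec_smul,
    inv_mulVec_eq_inv_smul_of_mulVec_eq_smul hA hQ heig, smul_smul, div_eq_mul_inv]

end Ridge

theorem stmt14_general {ntr nte p : ℕ} (hntr : 0 < ntr) (lam : ℝ) (hlam : 0 < lam)
    (L : Matrix (Fin (ntr + nte)) (Fin (ntr + nte)) ℝ)
    (db : Fin (ntr + nte) → ℝ)
    (hL : Tendsto (fun k : ℕ => L ^ k) atTop (nhds (Matrix.of fun _ j => db j)))
    (Z : Matrix (Fin (ntr + nte)) (Fin p) ℝ) (Ytr : Fin ntr → ℝ) :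
    let v : Fin p → ℝ := Zᵀ *ᵥ db
    let Ztr : ℕ → Matrix (Fin ntr) (Fin p) ℝ := fun k =>
      ((L ^ k) * Z).submatrix (Fin.castAdd nte) id
    let Zte : ℕ → Matrix (Fin nte) (Fin p) ℝ := fun k =>
      ((L ^ k) * Z).submatrix (Fin.natAdd ntr) id
    let βhat : ℕ → (Fin p → ℝ) := fun k =>
      ((ntr : ℝ)⁻¹ • ((Ztr k)ᵀ * Ztr k) + lam • (1 : Matrix (Fin p) (Fin p) ℝ))⁻¹ *ᵥ
        ((ntr : ℝ)⁻¹ • ((Ztr k)ᵀ *ᵥ Ytr))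
    let ybar : ℝ := (ntr : ℝ)⁻¹ * ∑ i, Ytr i
    Tendsto (fun k : ℕ => Zte k *ᵥ βhat k) atTop
      (nhds fun _ : Fin nte =>
        ((∑ j, v j ^ 2) / (lam + ∑ j, v j ^ 2)) * ybar) := by
  intro v Ztr Zte βhat ybar
  have hLZ : Tendsto (fun k => L ^ k * Z) atTop (𝓝 (replicateRow (Fin (ntr + nte)) v)) := by
    rw [← replicateRow_mul]
    exact ((continuous_id.matrix_mul continuous_const).tendsto _).comp hL
  have hZtr : Tendsto Ztr atTop (𝓝 (replicateRow (Fin ntr) v)) :=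
    ((continuous_id.matrix_submatrix _ _).tendsto _).comp hLZ
  have hZte : Tendsto Zte atTop (𝓝 (replicateRow (Fin nte) v)) :=
    ((continuous_id.matrix_submatrix _ _).tendsto _).comp hLZ
  have hβ : Tendsto βhat atTop (𝓝 ((ybar / (lam + v ⬝ᵥ v)) • v)) := by
    rw [← ridgeSolution_replicateRow hlam hntr]
    exact ((continuous_ridgeSolution hlam Ytr).tendsto _).comp hZtr
  have hlim : replicateRow (Fin nte) v *ᵥ ((ybar / (lam + v ⬝ᵥ v)) • v) =
      fun _ => ((∑ j, v j ^ 2) / (lam + ∑ j, v j ^ 2)) * ybar := by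
    have hsq : v ⬝ᵥ v = ∑ j, v j ^ 2 := by simp only [dotProduct, sq]
    rw [replicateRow_mulVec_eq_const, dotProduct_smul, hsq, smul_eq_mul]
    ext
    simp only [Function.const_apply]
    ring
  rw [← hlim]
  exact ((continuous_fst.matrix_mulVec continuous_snd).tendsto _).comp (hZte.prodMk_nhds hβ)

/-- Oversmoothing limit of ridge predictions: if `L^k → 1ₙ d̄ᵀ` with `d̄ᵀ1ₙ = 1`, then the
ridge predictions on the test rows of the smoothed features `L^k Z` converge to the constant
vector `(‖v‖²/(λ+‖v‖²)) ȳ_tr 1`, where `v = Zᵀ d̄` and `ȳ_tr` is the mean training label. -/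
theorem stmt14 {ntr nte p : ℕ} (hntr : 0 < ntr) (lam : ℝ) (hlam : 0 < lam)
    (L : Matrix (Fin (ntr + nte)) (Fin (ntr + nte)) ℝ)
    (db : Fin (ntr + nte) → ℝ) (hdb : ∑ i, db i = 1)
    (hL : Tendsto (fun k : ℕ => L ^ k) atTop (nhds (Matrix.of fun _ j => db j)))
    (Z : Matrix (Fin (ntr + nte)) (Fin p) ℝ) (Ytr : Fin ntr → ℝ) :
    let v : Fin p → ℝ := Zᵀ *ᵥ db
    let Ztr : ℕ → Matrix (Fin ntr) (Fin p) ℝ := fun k =>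
      ((L ^ k) * Z).submatrix (Fin.castAdd nte) id
    let Zte : ℕ → Matrix (Fin nte) (Fin p) ℝ := fun k =>
      ((L ^ k) * Z).submatrix (Fin.natAdd ntr) id
    let βhat : ℕ → (Fin p → ℝ) := fun k =>
      ((ntr : ℝ)⁻¹ • ((Ztr k)ᵀ * Ztr k) + lam • (1 : Matrix (Fin p) (Fin p) ℝ))⁻¹ *ᵥ
        ((ntr : ℝ)⁻¹ • ((Ztr k)ᵀ *ᵥ Ytr))
    let ybar : ℝ := (ntr : ℝ)⁻¹ * ∑ i, Ytr i
    Tendsto (fun k : ℕ => Zte k *ᵥ βhat k) atTop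
      (nhds fun _ : Fin nte =>
        ((∑ j, v j ^ 2) / (lam + ∑ j, v j ^ 2)) * ybar) :=
  stmt14_general hntr lam hlam L db hL Z Ytr
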